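/- If an infinite binary word x satisfies that both 0·x and 1·x belong to the shift orbit closure of the Thue-Morse word, then x equals the Thue-Morse word t or its complement t̄. -/

import Mathlib

/-- The Thue-Morse morphism on letters: μ(0)=01, μ(1)=10 (0 = `false`, 1 = `true`). -/
def mu : Bool → List Bool
  | false => [false, true]
  | true  => [true, false]

/-- The Thue-Morse morphism extended to words. -/
def muW (w : List Bool) : List Bool := w.flatMap mu

/-- The finite word `u` is a prefix of the infinite word `x`. -/
def IsPrefixI (u : List Bool) (x : ℕ → Bool) : Prop :=
  ∀ i, i < u.length → u.getD i false = x i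

/-- `t` is the Thue-Morse word: every `μ^n(0)` is a prefix of `t`. -/
def IsTMWord (t : ℕ → Bool) : Prop :=
  ∀ n, IsPrefixI (muW^[n] [false]) t

/-- The finite word `u` is a factor of the infinite word `x`. -/
def IsFactorI (u : List Bool) (x : ℕ → Bool) : Prop :=
  ∃ k, ∀ i, i < u.length → u.getD i false = x (k + i)

/-- Prepend a letter to an infinite word. -/
def consI (a : Bool) (x : ℕ → Bool) : ℕ → Bool :=
  fun n => if n = 0 then a else x (n - 1)

/-- `x` belongs to the shift orbit closure of the infinite word `w`. -/
def InOrbitClosure (x w : ℕ → Bool) : Prop :=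
  ∀ u : List Bool, IsFactorI u x → IsFactorI u w

/-!
Write `T n` for the parity of the binary digit sum of `n`, so that `T (2n) = T n` and
`T (2n+1) = !T n`; every `μ^n(0)` is a prefix of `T`, so `t = T`.

If both `0x` and `1x` lie in the orbit closure, every prefix of `x` occurs in `T` right after
a `0` and right after a `1`. Since `T` is a concatenation of the blocks `01`, `10` placed at
even positions, an occurrence of a prefix of `x` at an odd position, together with the
alternation `x (2j+1) = !x (2j)` known for shorter prefixes, makes all the `x (2j)` equal;
then either the block containing the preceding letter has two equal letters, or `T` has three
equal consecutive letters. Hence the prefixes of `x` occur at even positions, `x = μ(y)` with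
`y n = x (2n)`, and `y` inherits the property of `x`. Induction on `k` then gives
`x k = x 0 xor T k`.
-/

def thueMorse (n : ℕ) : Bool := ((Nat.bits n).count true).bodd

@[simp]
lemma thueMorse_zero : thueMorse 0 = false := rfl

@[simp]
lemma thueMorse_two_mul (n : ℕ) : thueMorse (2 * n) = thueMorse n := by
  rcases Nat.eq_zero_or_pos n with rfl | hn
  · rfl
  · simp [thueMorse, Nat.bit0_bits n hn.ne']

@[simp]
lemma thueMorse_two_mul_add_one (n : ℕ) : thueMorse (2 * n + 1) = !thueMorse n := by
  simp [thueMorse, Nat.bit1_bits, Nat.bodd_succ]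

lemma thueMorse_succ_of_even {n : ℕ} (hn : Even n) : thueMorse (n + 1) = !thueMorse n := by
  obtain ⟨j, rfl⟩ := hn
  rw [← two_mul, thueMorse_two_mul_add_one, thueMorse_two_mul]

lemma thueMorse_no_letter_cube (n : ℕ) :
    ¬ (thueMorse (n + 1) = thueMorse n ∧ thueMorse (n + 2) = thueMorse (n + 1)) := by
  rintro ⟨h₁, h₂⟩
  rcases Nat.even_or_odd n with hn | hn
  · rw [thueMorse_succ_of_even hn] at h₁
    simp at h₁
  · rw [thueMorse_succ_of_even hn.add_one] at h₂
    simp at h₂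

lemma muW_cons (a : Bool) (l : List Bool) : muW (a :: l) = a :: (!a) :: muW l := by
  cases a <;> rfl

lemma length_muW (l : List Bool) : (muW l).length = 2 * l.length := by
  induction l with
  | nil => rfl
  | cons a l ih => rw [muW_cons]; simp [ih]; ring

lemma getD_muW (l : List Bool) {j : ℕ} (hj : j < l.length) :
    (muW l).getD (2 * j) false = l.getD j false ∧
      (muW l).getD (2 * j + 1) false = !l.getD j false := by
  induction l generalizing j with
  | nil => simp at hj
  | cons a l ih =>
    rw [muW_cons]
    cases j with
    | zero => simp
    | succ j => simpa [Nat.mul_succ] using ih (by simpa using hj)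

lemma muW_iterate_eq_thueMorse (n : ℕ) :
    (muW^[n] [false]).length = 2 ^ n ∧
      ∀ i < 2 ^ n, (muW^[n] [false]).getD i false = thueMorse i := by
  induction n with
  | zero => exact ⟨rfl, fun i hi => by obtain rfl : i = 0 := (by omega); rfl⟩
  | succ n ih =>
    obtain ⟨hlen, hget⟩ := ih
    rw [Function.iterate_succ_apply', length_muW, hlen, pow_succ']
    refine ⟨rfl, fun i hi => ?_⟩
    obtain ⟨j, rfl | rfl⟩ := Nat.even_or_odd' i
    · rw [(getD_muW _ (by omega)).1, hget j (by omega), thueMorse_two_mul]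
    · rw [(getD_muW _ (by omega)).2, hget j (by omega), thueMorse_two_mul_add_one]

lemma IsTMWord.eq_thueMorse {t : ℕ → Bool} (ht : IsTMWord t) : t = thueMorse := by
  funext n
  obtain ⟨hlen, hget⟩ := muW_iterate_eq_thueMorse n
  have hn : n < 2 ^ n := Nat.lt_two_pow_self
  rw [← hget n hn]
  exact (ht n n (hlen ▸ hn)).symm

lemma isFactorI_map_range_iff {x w : ℕ → Bool} {n : ℕ} :
    IsFactorI ((List.range n).map x) w ↔ ∃ k, ∀ i < n, x i = w (k + i) := by
  refine exists_congr fun k => forall_congr' fun i => ?_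
  simp +contextual [List.getD_eq_getElem?_getD]

def IsLeftSpecial (x : ℕ → Bool) : Prop :=
  ∀ (b : Bool) (m : ℕ), ∃ p, thueMorse p = b ∧ ∀ i < m, thueMorse (p + 1 + i) = x i

lemma isLeftSpecial_of_inOrbitClosure {x : ℕ → Bool}
    (h₀ : InOrbitClosure (consI false x) thueMorse)
    (h₁ : InOrbitClosure (consI true x) thueMorse) : IsLeftSpecial x := by
  intro b m
  have hpre : IsFactorI ((List.range (m + 1)).map (consI b x)) (consI b x) :=
    isFactorI_map_range_iff.2 ⟨0, fun i _ => by rw [zero_add]⟩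
  obtain ⟨p, hp⟩ : ∃ p, ∀ i < m + 1, consI b x i = thueMorse (p + i) :=
    isFactorI_map_range_iff.1 (by cases b; exacts [h₀ _ hpre, h₁ _ hpre])
  refine ⟨p, by simpa [consI] using (hp 0 (by omega)).symm, fun i hi => ?_⟩
  simpa [consI, add_assoc, add_comm 1] using (hp (i + 1) (by omega)).symm

/-- Reading `x` at an odd position of `thueMorse` pairs `x (2j+1)` with `x (2j+2)` in a block. -/
lemma apply_two_mul_eq_apply_zero_of_occurs_at_odd {x : ℕ → Bool} {q n : ℕ} (hq : Odd q)
    (hocc : ∀ i ≤ 2 * n, thueMorse (q + i) = x i)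
    (hal : ∀ j < n, x (2 * j + 1) = !x (2 * j)) : ∀ j ≤ n, x (2 * j) = x 0 := by
  intro j hj
  induction j with
  | zero => rfl
  | succ j ih =>
    have hblock := thueMorse_succ_of_even (n := q + (2 * j + 1)) (by
      rw [← add_assoc]; exact hq.add_odd (odd_two_mul_add_one j))
    rw [hocc _ (by omega), add_assoc, hocc _ (by omega)] at hblock
    rw [Nat.mul_succ, hblock, hal j (by omega), Bool.not_not, ih (by omega)]

namespace IsLeftSpecial

variable {x : ℕ → Bool}

lemma succ_two_mul (hx : IsLeftSpecial x) (k : ℕ) : x (2 * k + 1) = !x (2 * k) := by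
  induction k using Nat.strong_induction_on with
  | _ k ih =>
  obtain ⟨p, hp, hocc⟩ := hx (x (2 * k)) (2 * k + 2)
  rcases Nat.even_or_odd p with hpe | hpo
  · -- the block at `p` would read `x (2k), x 0`, two equal letters
    have hconst := apply_two_mul_eq_apply_zero_of_occurs_at_odd hpe.add_one
      (fun i hi => hocc i (by omega)) ih k le_rfl
    have := thueMorse_succ_of_even hpe
    rw [← add_zero (p + 1), hocc 0 (by omega), hp, hconst] at this
    simp at this
  · have := thueMorse_succ_of_even (n := p + 1 + 2 * k) (by
      rw [add_assoc, add_comm 1]; exact hpo.add_odd (odd_two_mul_add_one k))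
    rwa [hocc _ (by omega), add_assoc, hocc _ (by omega)] at this

lemma comp_two_mul (hx : IsLeftSpecial x) : IsLeftSpecial (fun n => x (2 * n)) := by
  intro b m
  obtain ⟨p, hp, hocc⟩ := hx (!b) (2 * m + 6)
  rcases Nat.even_or_odd p with ⟨r, rfl⟩ | ⟨q, rfl⟩
  · exfalso
    have hconst := apply_two_mul_eq_apply_zero_of_occurs_at_odd (n := 2)
      (Even.add_self r).add_one (fun i hi => hocc i (by omega)) (fun j _ => hx.succ_two_mul j)
    have hrun : ∀ j ≤ 2, thueMorse (r + 1 + j) = !x 0 := fun j hj => by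
      rw [← hconst j hj, ← hx.succ_two_mul, ← hocc _ (by omega), ← thueMorse_two_mul]
      congr 1; ring
    exact thueMorse_no_letter_cube (r + 1)
      ⟨(hrun 1 (by omega)).trans (hrun 0 (by omega)).symm,
        (hrun 2 le_rfl).trans (hrun 1 (by omega)).symm⟩
  · refine ⟨q, by simpa using hp, fun i hi => ?_⟩
    show thueMorse _ = x (2 * i)
    rw [← hocc (2 * i) (by omega), ← thueMorse_two_mul]
    congr 1; ring

lemma apply_eq_xor (hx : IsLeftSpecial x) (k : ℕ) : x k = (x 0 ^^ thueMorse k) := by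
  induction k using Nat.strong_induction_on generalizing x with
  | _ k ih =>
  obtain ⟨j, rfl | rfl⟩ := Nat.even_or_odd' k
  · rcases Nat.eq_zero_or_pos j with rfl | hj
    · simp
    · simpa using ih j (by omega) hx.comp_two_mul
  · rw [hx.succ_two_mul, ih (2 * j) (by omega) hx, thueMorse_two_mul_add_one,
      thueMorse_two_mul]
    simp

end IsLeftSpecial

theorem tm_left_special (t x : ℕ → Bool) (ht : IsTMWord t)
    (h0 : InOrbitClosure (consI false x) t)
    (h1 : InOrbitClosure (consI true x) t) :
    x = t ∨ x = fun n => !(t n) := by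
  obtain rfl := ht.eq_thueMorse
  have hx := isLeftSpecial_of_inOrbitClosure h0 h1
  cases hx0 : x 0
  · exact Or.inl (funext fun n => by simpa [hx0] using hx.apply_eq_xor n)
  · exact Or.inr (funext fun n => by simpa [hx0] using hx.apply_eq_xor n)
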